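/- arXiv:2311.15404 — 5 statements merged into one kernel-verified Lean document; each statement's English description precedes it below -/
import Mathlib

section
/- Let X be a finite set and let the label space be {-1, +1} with the 0-1 loss. For every deterministic learning rule A mapping samples of size m from X × {-1,+1} to predictors h : X → {-1,+1}, there exists a labeling function f : X → {-1,+1} such that, with D the distribution on X × {-1,+1} given by drawing x uniformly from X and outputting (x, f(x)), the predictor f has zero population error L_D(f) = 0, yet the expected population error of the learned predictor satisfies E_{S ~ D^m}[ L_D(A(S)) ] ≥ 1/2 − m / (2 |X|). -/
open Finset

/-!
Average over all `2 ^ |X|` labelings `f`. Fix a sample of points `xs`. If `x` does not occur in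
`xs`, flipping `f` at `x` leaves the labeled sample, hence the learned predictor, unchanged while
flipping the correct label at `x`; so the predictor errs at `x` for exactly half of the labelings.
At least `|X| - m` points are unseen, so the mean over `f` of the expected error is at least
`(|X| - m) / (2 |X|)`, and some labeling does at least as badly as the mean.
-/

theorem two_mul_card_filter_of_perm_swaps {α : Type*} [Fintype α] (e : Equiv.Perm α)
    (p : α → Prop) [DecidablePred p] (he : ∀ a, p (e a) ↔ ¬ p a) :
    2 * #{a | p a} = Fintype.card α := by
  have hswap : #{a | p a} = #{a | ¬ p a} :=
    card_equiv e fun a => by simp only [mem_filter, mem_univ, true_and, he, not_not]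
  rw [two_mul]
  nth_rw 2 [hswap]
  exact card_filter_add_card_filter_not _

section Labelings

variable {X : Type*} [DecidableEq X]

def flipAt (x : X) : Equiv.Perm (X → Bool) :=
  Function.Involutive.toPerm (fun f => Function.update f x !(f x)) fun f => by
    ext y
    by_cases hy : y = x
    · subst hy; simp
    · simp [Function.update_of_ne hy]

theorem flipAt_apply_self (x : X) (f : X → Bool) : flipAt x f x = !f x :=
  Function.update_self ..

theorem flipAt_apply_of_ne {x y : X} (h : y ≠ x) (f : X → Bool) : flipAt x f y = f y :=
  Function.update_of_ne h ..

theorem two_mul_card_mistakes_at_of_flipAt_invariant [Fintype X] (x : X)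
    (F : (X → Bool) → Bool) (hF : ∀ f, F (flipAt x f) = F f) :
    2 * #{f | F f ≠ f x} = 2 ^ Fintype.card X := by
  rw [two_mul_card_filter_of_perm_swaps (flipAt x) _ fun f => ?_]
  · simp
  · rw [hF, flipAt_apply_self]
    cases F f <;> cases f x <;> simp

def labeledSample {m : ℕ} (xs : Fin m → X) (f : X → Bool) : Fin m → X × Bool :=
  fun i => (xs i, f (xs i))

theorem labeledSample_flipAt {m : ℕ} {xs : Fin m → X} {x : X} (hx : x ∉ Set.range xs)
    (f : X → Bool) : labeledSample xs (flipAt x f) = labeledSample xs f := by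
  funext i
  rw [labeledSample, labeledSample, flipAt_apply_of_ne fun h => hx ⟨i, h⟩]

theorem card_mul_two_pow_le_sum_card_mistakes [Fintype X] {m : ℕ}
    (A : (Fin m → X × Bool) → X → Bool) (xs : Fin m → X) :
    Fintype.card X * 2 ^ Fintype.card X ≤
      2 * ∑ f : X → Bool, #{x | A (labeledSample xs f) x ≠ f x} + m * 2 ^ Fintype.card X := by
  set n := Fintype.card X
  set unseen : Finset X := (univ.image xs)ᶜ
  have hunseen : n ≤ #unseen + m := by
    have hseen : #(univ.image xs) ≤ m := card_image_le.trans_eq (card_fin m)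
    have := card_le_univ (univ.image xs)
    rw [card_compl]
    omega
  have hcount : ∀ x ∈ unseen, 2 * #{f | A (labeledSample xs f) x ≠ f x} = 2 ^ n := by
    intro x hx
    refine two_mul_card_mistakes_at_of_flipAt_invariant x _ fun f => ?_
    rw [labeledSample_flipAt (by simpa [unseen] using hx)]
  have hdouble : ∑ f : X → Bool, #{x | A (labeledSample xs f) x ≠ f x} =
      ∑ x : X, #{f : X → Bool | A (labeledSample xs f) x ≠ f x} :=
    sum_card_bipartiteAbove_eq_sum_card_bipartiteBelow _
  calc n * 2 ^ n ≤ #unseen * 2 ^ n + m * 2 ^ n := by rw [← add_mul]; gcongr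
    _ = 2 * ∑ x ∈ unseen, #{f | A (labeledSample xs f) x ≠ f x} + m * 2 ^ n := by
      rw [mul_sum, sum_congr rfl hcount, sum_const, smul_eq_mul]
    _ ≤ 2 * ∑ f : X → Bool, #{x | A (labeledSample xs f) x ≠ f x} + m * 2 ^ n := by
      rw [hdouble]
      gcongr
      exact subset_univ _

end Labelings

theorem sum_expected_mistakes_ge {X : Type*} [Fintype X] [DecidableEq X] [Nonempty X] {m : ℕ}
    (A : (Fin m → X × Bool) → X → Bool) :
    ∑ f : X → Bool, ((Fintype.card X : ℝ) ^ m)⁻¹ * ∑ xs : Fin m → X,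
        (Fintype.card X : ℝ)⁻¹ * #{x | A (labeledSample xs f) x ≠ f x} ≥
      ∑ _f : X → Bool, (1 / 2 - (m : ℝ) / (2 * Fintype.card X)) := by
  set n := Fintype.card X
  have hn : (0 : ℝ) < n := by exact_mod_cast Fintype.card_pos
  have hsample : ∀ xs : Fin m → X,
      ((n : ℝ) - m) * 2 ^ n / 2 ≤ ∑ f : X → Bool, (#{x | A (labeledSample xs f) x ≠ f x} : ℝ) := by
    intro xs
    have h : (n : ℝ) * 2 ^ n ≤
        2 * ∑ f : X → Bool, (#{x | A (labeledSample xs f) x ≠ f x} : ℝ) + m * 2 ^ n := by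
      exact_mod_cast card_mul_two_pow_le_sum_card_mistakes A xs
    linarith
  have hswap : ∑ f : X → Bool, ((n : ℝ) ^ m)⁻¹ * ∑ xs : Fin m → X,
        (n : ℝ)⁻¹ * #{x | A (labeledSample xs f) x ≠ f x} =
      ((n : ℝ) ^ m)⁻¹ * (n : ℝ)⁻¹ *
        ∑ xs : Fin m → X, ∑ f : X → Bool, (#{x | A (labeledSample xs f) x ≠ f x} : ℝ) := by
    simp only [← mul_sum]
    rw [sum_comm, mul_assoc]
  rw [ge_iff_le, hswap]
  calc ∑ _f : X → Bool, (1 / 2 - (m : ℝ) / (2 * n))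
      = ((n : ℝ) ^ m)⁻¹ * (n : ℝ)⁻¹ * ∑ _xs : Fin m → X, ((n : ℝ) - m) * 2 ^ n / 2 := by
        simp only [sum_const, card_univ, Fintype.card_fun, Fintype.card_fin, Fintype.card_bool,
          nsmul_eq_mul]
        push_cast
        field_simp
        ring
    _ ≤ _ := by gcongr with xs; exact hsample xs

theorem no_free_lunch_general
    (X : Type*) [Fintype X] [Nonempty X] (m : ℕ)
    (A : (Fin m → X × Bool) → (X → Bool)) :
    ∃ f : X → Bool,
      ((Fintype.card X : ℝ))⁻¹ *
          ((univ.filter fun x : X => f x ≠ f x).card : ℝ) = 0 ∧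
      ((Fintype.card X : ℝ) ^ m)⁻¹ *
          ∑ xs : Fin m → X,
            ((Fintype.card X : ℝ))⁻¹ *
              ((univ.filter fun x : X =>
                  A (fun i => (xs i, f (xs i))) x ≠ f x).card : ℝ)
        ≥ 1 / 2 - (m : ℝ) / (2 * Fintype.card X) := by
  classical
  obtain ⟨f, -, hf⟩ := exists_le_of_sum_le univ_nonempty (sum_expected_mistakes_ge A)
  exact ⟨f, by simp, hf⟩

/-- No-free-lunch theorem: for every deterministic learning rule `A` mapping samples of
size `m` over a finite domain `X` with binary labels to predictors, there is a labeling
function `f` whose induced distribution (uniform `x`, label `f x`) has zero population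
error for `f` itself, while the expected population 0-1 error of `A` is at least
`1/2 - m / (2 |X|)`. -/
theorem no_free_lunch
    (X : Type*) [Fintype X] [DecidableEq X] [Nonempty X] (m : ℕ)
    (A : (Fin m → X × Bool) → (X → Bool)) :
    ∃ f : X → Bool,
      ((Fintype.card X : ℝ))⁻¹ *
          ((univ.filter fun x : X => f x ≠ f x).card : ℝ) = 0 ∧
      ((Fintype.card X : ℝ) ^ m)⁻¹ *
          ∑ xs : Fin m → X,
            ((Fintype.card X : ℝ))⁻¹ *
              ((univ.filter fun x : X =>
                  A (fun i => (xs i, f (xs i))) x ≠ f x).card : ℝ)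
        ≥ 1 / 2 - (m : ℝ) / (2 * Fintype.card X) :=
  no_free_lunch_general X m A
end

section
/- Let Z be a measurable space, D a probability distribution on Z, W a set, and f : W × Z → ℝ measurable and bounded. For each k let w̃ : Z^k → W be a symmetric learning rule, i.e. invariant under permutation of its arguments. Assume the rule is leave-one-out β(m)-stable: for all z_1, …, z_m ∈ Z, | f(w̃(z_1,…,z_{m−1}), z_m) − f(w̃(z_1,…,z_m), z_m) | ≤ β(m). Then for z_1, …, z_m drawn i.i.d. from D, E[ f(w̃(z_1,…,z_{m−1}), z_m) ] ≤ E[ (1/m) Σ_{i=1}^m f(w̃(z_1,…,z_m), z_i) ] + β(m). -/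
/-!
Swapping two coordinates of an i.i.d. sample preserves its law, and a symmetric rule does not see
the swap; so every term `f(w̃(z), z_i)` of the empirical risk has the same expectation as
`f(w̃(z), z_m)`. The expected empirical risk is therefore `E f(w̃(z_1,…,z_m), z_m)`, which differs
from the leave-one-out loss `E f(w̃(z_1,…,z_{m−1}), z_m)` by at most `β(m)` pointwise.
-/

open MeasureTheory

section Exchangeable

variable {ι Z : Type*} [Fintype ι] [MeasurableSpace Z] (μ : Measure Z) [SigmaFinite μ]
  {E : Type*} [NormedAddCommGroup E] [NormedSpace ℝ E]

theorem integral_comp_perm_pi (g : (ι → Z) → E) (σ : Equiv.Perm ι) :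
    ∫ z, g (z ∘ σ) ∂Measure.pi (fun _ => μ) = ∫ z, g z ∂Measure.pi fun _ => μ := by
  rw [← (measurePreserving_piCongrLeft (fun _ : ι => μ) σ.symm).integral_comp' g]
  congr 1 with z
  congr 1 with i
  simp [MeasurableEquiv.piCongrLeft, Equiv.piCongrLeft_apply_eq_cast]

variable [DecidableEq ι] {W : Type*} {F : (ι → Z) → W}

theorem integral_eval_eq_of_perm_invariant (hF : ∀ (σ : Equiv.Perm ι) z, F (z ∘ σ) = F z)
    (g : W → Z → E) (i j : ι) :
    ∫ z, g (F z) (z i) ∂Measure.pi (fun _ => μ) = ∫ z, g (F z) (z j) ∂Measure.pi fun _ => μ := by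
  rw [← integral_comp_perm_pi μ (fun z => g (F z) (z j)) (Equiv.swap i j)]
  simp only [hF, Function.comp_apply, Equiv.swap_apply_right]

theorem integral_sum_eval_eq_of_perm_invariant (hF : ∀ (σ : Equiv.Perm ι) z, F (z ∘ σ) = F z)
    {g : W → Z → E} (hg : ∀ i, Integrable (fun z => g (F z) (z i)) (Measure.pi fun _ => μ))
    (j : ι) :
    ∫ z, ∑ i, g (F z) (z i) ∂Measure.pi (fun _ => μ) =
      Fintype.card ι • ∫ z, g (F z) (z j) ∂Measure.pi fun _ => μ := by
  rw [integral_finsetSum _ fun i _ => hg i]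
  simp only [integral_eval_eq_of_perm_invariant μ hF g _ j, Finset.sum_const, Finset.card_univ]

end Exchangeable

theorem integrable_comp_of_abs_le {α Z W : Type*} [MeasurableSpace α] [MeasurableSpace Z]
    [MeasurableSpace W] {ν : Measure α} [IsFiniteMeasure ν] {f : W → Z → ℝ}
    (hf : Measurable (Function.uncurry f)) {C : ℝ} (hC : ∀ w z, |f w z| ≤ C)
    {a : α → W} {b : α → Z} (ha : Measurable a) (hb : Measurable b) :
    Integrable (fun x => f (a x) (b x)) ν :=
  .of_bound (hf.comp (ha.prodMk hb)).aestronglyMeasurable C (ae_of_all _ fun _ => hC _ _)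

theorem stability_implies_generalization_general
    {Z : Type*} [MeasurableSpace Z] {W : Type*} [MeasurableSpace W]
    (μ : Measure Z) [IsProbabilityMeasure μ]
    (f : W → Z → ℝ)
    (hfmeas : Measurable (Function.uncurry f))
    (C : ℝ) (hfbdd : ∀ w z, |f w z| ≤ C)
    (n : ℕ)
    (A : (k : ℕ) → (Fin k → Z) → W)
    (hAmeas : ∀ k, Measurable (A k))
    (hAsymm : ∀ k (σ : Equiv.Perm (Fin k)) (z : Fin k → Z), A k (z ∘ σ) = A k z)
    (β : ℕ → ℝ)
    (hstable : ∀ z : Fin (n + 1) → Z,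
      |f (A n fun i => z i.castSucc) (z (Fin.last n)) -
          f (A (n + 1) z) (z (Fin.last n))| ≤ β (n + 1)) :
    (∫ z : Fin (n + 1) → Z, f (A n fun i => z i.castSucc) (z (Fin.last n))
        ∂Measure.pi fun _ => μ) ≤
      (∫ z : Fin (n + 1) → Z, (1 / (n + 1) : ℝ) * ∑ i, f (A (n + 1) z) (z i)
        ∂Measure.pi fun _ => μ) + β (n + 1) := by
  set π : Measure (Fin (n + 1) → Z) := Measure.pi fun _ => μ
  have hint_full : ∀ i : Fin (n + 1), Integrable (fun z => f (A (n + 1) z) (z i)) π := fun i =>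
    integrable_comp_of_abs_le hfmeas hfbdd (hAmeas _) (measurable_pi_apply i)
  have hint_loo : Integrable (fun z => f (A n fun i => z i.castSucc) (z (Fin.last n))) π :=
    integrable_comp_of_abs_le hfmeas hfbdd
      ((hAmeas n).comp (measurable_pi_lambda _ fun i => measurable_pi_apply i.castSucc))
      (measurable_pi_apply _)
  have hempirical : ∫ z, (1 / (n + 1) : ℝ) * ∑ i, f (A (n + 1) z) (z i) ∂π =
      ∫ z, f (A (n + 1) z) (z (Fin.last n)) ∂π := by
    rw [integral_const_mul, integral_sum_eval_eq_of_perm_invariant μ (hAsymm _) hint_full,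
      Fintype.card_fin, nsmul_eq_mul]
    field_simp
    push_cast
    ring
  have hgap : ∫ z, f (A n fun i => z i.castSucc) (z (Fin.last n)) -
      f (A (n + 1) z) (z (Fin.last n)) ∂π ≤ β (n + 1) := by
    simpa using integral_mono (hint_loo.sub (hint_full _)) (integrable_const (β (n + 1)))
      fun z => (abs_le.1 (hstable z)).2
  rw [integral_sub hint_loo (hint_full _)] at hgap
  linarith

/-- Stability implies generalization: if a symmetric learning rule is leave-one-out
`β(m)`-stable, then its expected population risk (trained on `m − 1` points, evaluated
on a fresh point) is at most its expected empirical risk on `m` points plus `β(m)`.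
Here `m = n + 1`. -/
theorem stability_implies_generalization
    {Z : Type*} [MeasurableSpace Z] {W : Type*} [MeasurableSpace W]
    (μ : Measure Z) [IsProbabilityMeasure μ]
    (f : W → Z → ℝ)
    (hfmeas : Measurable (Function.uncurry f))
    (C : ℝ) (hfbdd : ∀ w z, |f w z| ≤ C)
    (n : ℕ)
    (A : (k : ℕ) → (Fin k → Z) → W)
    (hAmeas : ∀ k, Measurable (A k))
    (hAsymm : ∀ k (σ : Equiv.Perm (Fin k)) (z : Fin k → Z), A k (z ∘ σ) = A k z)
    (β : ℕ → ℝ) (hβ : Antitone β)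
    (hstable : ∀ z : Fin (n + 1) → Z,
      |f (A n fun i => z i.castSucc) (z (Fin.last n)) -
          f (A (n + 1) z) (z (Fin.last n))| ≤ β (n + 1)) :
    (∫ z : Fin (n + 1) → Z, f (A n fun i => z i.castSucc) (z (Fin.last n))
        ∂Measure.pi fun _ => μ) ≤
      (∫ z : Fin (n + 1) → Z, (1 / (n + 1) : ℝ) * ∑ i, f (A (n + 1) z) (z i)
        ∂Measure.pi fun _ => μ) + β (n + 1) :=
  stability_implies_generalization_general μ f hfmeas C hfbdd n A hAmeas hAsymm β hstable
end

section
/- Let W ⊆ ℝ^d be convex, let f : W × Z → ℝ be such that f(·, z) is convex and G-Lipschitz with respect to the Euclidean norm for every z ∈ Z, and let Ψ : W → ℝ be α-strongly convex with respect to the Euclidean norm. For a dataset S = (z_1, …, z_m) define the regularized ERM R(S) = argmin_{w ∈ W} { (1/m) Σ_{i=1}^m f(w, z_i) + λ Ψ(w) } with λ > 0, and for z' ∈ Z let S' = (z_1, …, z_{m−1}, z') be the dataset with z_m replaced by z'. Then for all z_1, …, z_m, z' ∈ Z, | f(R(S'), z_m) − f(R(S), z_m) | ≤ 2G² / (α m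 λ). -/
private lemma convexOn_avg_sum {d : ℕ} {Z : Type*} {W : Set (EuclideanSpace ℝ (Fin d))}
    (hW : Convex ℝ W) (f : EuclideanSpace ℝ (Fin d) → Z → ℝ)
    (hconv : ∀ z, ConvexOn ℝ W fun w => f w z) {n : ℕ} (T : Fin n → Z) {c : ℝ}
    (hc : 0 ≤ c) : ConvexOn ℝ W fun w => c * ∑ i, f w (T i) := by
  refine ⟨hW, fun x hx y hy a b ha hb hab => ?_⟩
  simp only [smul_eq_mul]
  have h1 : ∑ i, f (a • x + b • y) (T i) ≤ ∑ i, (a * f x (T i) + b * f y (T i)) := by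
    refine Finset.sum_le_sum fun i _ => ?_
    have := (hconv (T i)).2 hx hy ha hb hab
    simpa using this
  have h2 : ∑ i, (a * f x (T i) + b * f y (T i))
      = a * ∑ i, f x (T i) + b * ∑ i, f y (T i) := by
    rw [Finset.sum_add_distrib, Finset.mul_sum, Finset.mul_sum]
  nlinarith [mul_le_mul_of_nonneg_left (h2 ▸ h1) hc]

private lemma growth_aux {d : ℕ} {W : Set (EuclideanSpace ℝ (Fin d))} (hW : Convex ℝ W)
    {g Ψ : EuclideanSpace ℝ (Fin d) → ℝ} (hg : ConvexOn ℝ W g)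
    {α : ℝ} (hΨ : StrongConvexOn W α Ψ) {lam : ℝ} (hlam : 0 < lam)
    {w0 w1 : EuclideanSpace ℝ (Fin d)} (h0 : w0 ∈ W) (h1 : w1 ∈ W)
    (hmin : ∀ w ∈ W, g w0 + lam * Ψ w0 ≤ g w + lam * Ψ w)
    {t : ℝ} (ht0 : 0 < t) (ht1 : t < 1) :
    (1 - t) * (lam * α / 2) * ‖w1 - w0‖ ^ 2
      ≤ (g w1 + lam * Ψ w1) - (g w0 + lam * Ψ w0) := by
  have hb : (0:ℝ) ≤ 1 - t := by linarith
  have ha : (0:ℝ) ≤ t := ht0.le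
  have hab : t + (1 - t) = 1 := by ring
  have hmem : t • w1 + (1 - t) • w0 ∈ W := hW h1 h0 ha hb hab
  have hgc := hg.2 h1 h0 ha hb hab
  have hΨc := hΨ.2 h1 h0 ha hb hab
  have hm := hmin _ hmem
  simp only [smul_eq_mul] at hgc hΨc
  have hΨc' := mul_le_mul_of_nonneg_left hΨc hlam.le
  have key : t * ((1 - t) * (lam * α / 2) * ‖w1 - w0‖ ^ 2)
      ≤ t * ((g w1 + lam * Ψ w1) - (g w0 + lam * Ψ w0)) := by nlinarith
  exact le_of_mul_le_mul_left key ht0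

/-- Replace-one-out stability of regularized ERM: if `f(·, z)` is convex and
`G`-Lipschitz on the convex set `W` for every `z`, and `Ψ` is `α`-strongly convex on
`W`, then replacing the last sample point `z_m` by `z'` changes the loss of the
regularized empirical risk minimizer on `z_m` by at most `2G²/(αmλ)`. Here `m = n+1`. -/
theorem rerm_replace_one_out_stability
    {d : ℕ} {Z : Type*} (n : ℕ)
    (W : Set (EuclideanSpace ℝ (Fin d))) (hW : Convex ℝ W)
    (f : EuclideanSpace ℝ (Fin d) → Z → ℝ)
    (G : ℝ) (hG : 0 ≤ G)
    (hconv : ∀ z, ConvexOn ℝ W fun w => f w z)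
    (hlip : ∀ z, ∀ w ∈ W, ∀ w' ∈ W, |f w z - f w' z| ≤ G * ‖w - w'‖)
    (Ψ : EuclideanSpace ℝ (Fin d) → ℝ)
    (α : ℝ) (hα : 0 < α) (hΨ : StrongConvexOn W α Ψ)
    (lam : ℝ) (hlam : 0 < lam)
    (S : Fin (n + 1) → Z) (z' : Z)
    (RS RS' : EuclideanSpace ℝ (Fin d))
    (hRS : RS ∈ W ∧ ∀ w ∈ W,
      (1 / (n + 1) : ℝ) * ∑ i, f RS (S i) + lam * Ψ RS ≤
        (1 / (n + 1) : ℝ) * ∑ i, f w (S i) + lam * Ψ w)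
    (hRS' : RS' ∈ W ∧ ∀ w ∈ W,
      (1 / (n + 1) : ℝ) * ∑ i, f RS' (Function.update S (Fin.last n) z' i) +
          lam * Ψ RS' ≤
        (1 / (n + 1) : ℝ) * ∑ i, f w (Function.update S (Fin.last n) z' i) +
          lam * Ψ w) :
    |f RS' (S (Fin.last n)) - f RS (S (Fin.last n))| ≤
      2 * G ^ 2 / (α * (n + 1) * lam) := by
  classical
  obtain ⟨hRSW, hRSmin⟩ := hRS
  obtain ⟨hRS'W, hRS'min⟩ := hRS'
  set j := Fin.last n with hj
  set S' := Function.update S j z' with hS'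
  set m : ℝ := (n + 1 : ℝ) with hm
  have hmpos : (0:ℝ) < m := by positivity
  set c : ℝ := 1 / m with hc
  have hcpos : 0 < c := by positivity
  set N : ℝ := ‖RS' - RS‖ with hN
  have hNrev : ‖RS - RS'‖ = N := norm_sub_rev _ _
  -- sum difference identity
  have hdiff : ∀ w, ∑ i, f w (S i) - ∑ i, f w (S' i) = f w (S j) - f w z' := by
    intro w
    have h2 : ∑ i, f w (S' i)
        = ∑ i, Function.update (fun i => f w (S i)) j (f w z') i :=
      Finset.sum_congr rfl fun i _ =>
        Function.apply_update (fun _ z => f w z) S j z' i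
    rw [h2, Finset.sum_update_of_mem (Finset.mem_univ j),
      ← Finset.sum_erase_add Finset.univ _ (Finset.mem_univ j),
      Finset.sdiff_singleton_eq_erase]
    ring
  -- Lipschitz bounds
  have l1 : f RS' (S j) - f RS (S j) ≤ G * N := by
    have := le_of_abs_le (hlip (S j) RS' hRS'W RS hRSW)
    linarith
  have l2 : f RS z' - f RS' z' ≤ G * N := by
    have := le_of_abs_le (hlip z' RS hRSW RS' hRS'W)
    rw [hNrev] at this
    linarith
  have hconvS : ConvexOn ℝ W fun w => c * ∑ i, f w (S i) :=
    convexOn_avg_sum hW f hconv S hcpos.le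
  have hconvS' : ConvexOn ℝ W fun w => c * ∑ i, f w (S' i) :=
    convexOn_avg_sum hW f hconv S' hcpos.le
  have key : ∀ t : ℝ, 0 < t → t < 1 → (1 - t) * (lam * α) * N ^ 2 ≤ 2 * c * G * N := by
    intro t ht0 ht1
    have h1 := growth_aux hW hconvS hΨ hlam hRSW hRS'W hRSmin ht0 ht1
    have h2 := growth_aux hW hconvS' hΨ hlam hRS'W hRSW hRS'min ht0 ht1
    rw [hNrev] at h2
    have e1 : c * (∑ i, f RS' (S i) - ∑ i, f RS' (S' i))
        = c * (f RS' (S j) - f RS' z') := by rw [hdiff]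
    have e2 : c * (∑ i, f RS (S i) - ∑ i, f RS (S' i))
        = c * (f RS (S j) - f RS z') := by rw [hdiff]
    have m1 := mul_le_mul_of_nonneg_left l1 hcpos.le
    have m2 := mul_le_mul_of_nonneg_left l2 hcpos.le
    nlinarith [h1, h2, e1, e2, m1, m2]
  have hfin : lam * α * N ^ 2 ≤ 2 * c * G * N := by
    by_contra hcon
    push_neg at hcon
    have hD : (0:ℝ) ≤ 2 * c * G * N := by positivity
    have hC : 0 < lam * α * N ^ 2 := lt_of_le_of_lt hD hcon
    set t : ℝ := (lam * α * N ^ 2 - 2 * c * G * N) / (2 * (lam * α * N ^ 2)) with htdef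
    have ht0 : 0 < t := div_pos (by linarith) (by linarith)
    have ht1 : t < 1 := by
      rw [htdef, div_lt_one (by linarith)]
      linarith
    have h := key t ht0 ht1
    have ht2 : t * (lam * α * N ^ 2) = (lam * α * N ^ 2 - 2 * c * G * N) / 2 := by
      rw [htdef]
      field_simp
    nlinarith [h, ht2]
  rcases eq_or_lt_of_le (norm_nonneg (RS' - RS)) with h0 | hNpos
  · have : RS' = RS := by
      have : RS' - RS = 0 := by
        rw [← norm_eq_zero]; exact h0.symm
      exact sub_eq_zero.mp this
    rw [this, sub_self, abs_zero]
    positivity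
  · rw [← hN] at hNpos
    have hcm : c * m = 1 := by
      rw [hc, one_div, inv_mul_cancel₀ hmpos.ne']
    have hstep : lam * α * N * m ≤ 2 * G := by
      have h := mul_le_mul_of_nonneg_right hfin hmpos.le
      have h2 : 2 * c * G * N * m = 2 * G * N := by
        rw [show 2 * c * G * N * m = 2 * G * N * (c * m) from by ring, hcm, mul_one]
      rw [h2] at h
      nlinarith [h, hNpos]
    have habs : |f RS' (S j) - f RS (S j)| ≤ G * N :=
      hlip (S j) RS' hRS'W RS hRSW
    have hden : (0:ℝ) < α * (n + 1) * lam := by positivity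
    rw [le_div_iff₀ hden]
    have hmn : ((n:ℝ) + 1) = m := by rw [hm]
    rw [hmn]
    nlinarith [mul_le_mul_of_nonneg_right habs (by positivity : (0:ℝ) ≤ α * m * lam),
      mul_le_mul_of_nonneg_left hstep hG, mul_nonneg hG (le_of_lt hNpos)]
end

section
/- Let W ⊆ ℝ^d be convex, let f : W × Z → ℝ be such that f(·, z) is convex and G-Lipschitz with respect to the Euclidean norm for every z ∈ Z, and let Ψ : W → ℝ be α-strongly convex with respect to the Euclidean norm. For S = (z_1, …, z_m) define R(S) = argmin_{w ∈ W} { (1/m) Σ_{i=1}^m f(w, z_i) + λ Ψ(w) } with λ > 0, and let S^{(−m)} = (z_1, …, z_{m−1}) with corresponding minimizer R(S^{(−m)}) = argmin_{w ∈ W} { (1/(m)) Σ_{i=1}^{m−1} f(w, z_i) + λ Ψ(w) } of the leave-one-out regularized objective. Then ‖ R(S^{(−m)}) − R(S) ‖_2 ≤ G / (α m λ). -/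
/-!
Both regularized objectives are `λα`-strongly convex, so each grows at least quadratically,
by `(λα/2)‖w - w*‖²`, away from its minimizer `w*`. Adding the two quadratic-growth inequalities
at the two minimizers leaves `λα ‖R(S⁽⁻ᵐ⁾) - R(S)‖²` bounded by the increment of the difference
of the objectives, which is `f(·, z_m) / m` and hence `G/m`-Lipschitz. Dividing by the distance
gives the bound.
-/

open Filter Topology

theorem ConvexOn.sum {𝕜 E β ι : Type*} [Semiring 𝕜] [PartialOrder 𝕜] [AddCommMonoid E]
    [AddCommMonoid β] [PartialOrder β] [IsOrderedAddMonoid β] [SMul 𝕜 E] [Module 𝕜 β]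
    {s : Set E} (hs : Convex 𝕜 s) (t : Finset ι) {g : ι → E → β}
    (hg : ∀ i ∈ t, ConvexOn 𝕜 s (g i)) :
    ConvexOn 𝕜 s fun x => ∑ i ∈ t, g i x := by
  classical
  induction t using Finset.induction_on with
  | empty => simpa using convexOn_const 0 hs
  | insert a t hat ih =>
    simp_rw [Finset.sum_insert hat]
    exact (hg a (t.mem_insert_self a)).add (ih fun i hi => hg i (Finset.mem_insert_of_mem hi))

section StrongConvexity

variable {E : Type*} [NormedAddCommGroup E] [NormedSpace ℝ E] {s : Set E} {m : ℝ} {f g : E → ℝ}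

theorem StrongConvexOn.const_mul {c : ℝ} (hc : 0 ≤ c) (hf : StrongConvexOn s m f) :
    StrongConvexOn s (c * m) fun x => c * f x := by
  refine ⟨hf.1, fun x hx y hy a b ha hb hab => ?_⟩
  have h := mul_le_mul_of_nonneg_left (hf.2 hx hy ha hb hab) hc
  simp only [smul_eq_mul] at h ⊢
  linarith

theorem ConvexOn.add_strongConvexOn (hg : ConvexOn ℝ s g) (hf : StrongConvexOn s m f) :
    StrongConvexOn s m (g + f) := by
  have h := (uniformConvexOn_zero.mpr hg).add hf
  rwa [zero_add] at h

theorem StrongConvexOn.add_sq_le_of_isMinOn (hf : StrongConvexOn s m f) {x y : E}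
    (hx : x ∈ s) (hy : y ∈ s) (hmin : IsMinOn f s x) :
    f x + m / 2 * ‖y - x‖ ^ 2 ≤ f y := by
  -- Minimality against the segment point at parameter `t` gives `(1 - t) • growth ≤ f y - f x`;
  -- let `t → 0⁺`.
  suffices h : m / 2 * ‖y - x‖ ^ 2 ≤ f y - f x by linarith
  have hsegment : ∀ t ∈ Set.Ioo (0 : ℝ) 1, (1 - t) * (m / 2 * ‖y - x‖ ^ 2) ≤ f y - f x := by
    rintro t ⟨ht₀, ht₁⟩
    have hmem := hf.1 hx hy (by linarith) ht₀.le (sub_add_cancel 1 t)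
    have hconv := hf.2 hx hy (by linarith) ht₀.le (sub_add_cancel 1 t)
    have hle := isMinOn_iff.mp hmin _ hmem
    rw [norm_sub_rev] at hconv
    simp only [smul_eq_mul] at hconv
    have : t * ((1 - t) * (m / 2 * ‖y - x‖ ^ 2)) ≤ t * (f y - f x) := by linarith
    exact le_of_mul_le_mul_left this ht₀
  have hlim : Tendsto (fun t : ℝ => (1 - t) * (m / 2 * ‖y - x‖ ^ 2)) (𝓝[>] 0)
      (𝓝 (m / 2 * ‖y - x‖ ^ 2)) := by
    have hcont : Continuous fun t : ℝ => (1 - t) * (m / 2 * ‖y - x‖ ^ 2) := by fun_prop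
    exact (hcont.tendsto' 0 _ (by simp)).mono_left nhdsWithin_le_nhds
  exact le_of_tendsto hlim (mem_of_superset (Ioo_mem_nhdsGT one_pos) hsegment)

theorem StrongConvexOn.norm_sub_le_of_isMinOn {F₁ F₂ : E → ℝ} {μ L : ℝ} {x₁ x₂ : E}
    (hμ : 0 < μ) (hL : 0 ≤ L) (hF₁ : StrongConvexOn s μ F₁) (hF₂ : StrongConvexOn s μ F₂)
    (hx₁ : x₁ ∈ s) (hx₂ : x₂ ∈ s) (hmin₁ : IsMinOn F₁ s x₁) (hmin₂ : IsMinOn F₂ s x₂)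
    (hlip : ∀ x ∈ s, ∀ y ∈ s, |(F₁ - F₂) x - (F₁ - F₂) y| ≤ L * ‖x - y‖) :
    ‖x₂ - x₁‖ ≤ L / μ := by
  have h₁ := hF₁.add_sq_le_of_isMinOn hx₁ hx₂ hmin₁
  have h₂ := hF₂.add_sq_le_of_isMinOn hx₂ hx₁ hmin₂
  have hdiff := (le_abs_self _).trans (hlip x₂ hx₂ x₁ hx₁)
  rw [norm_sub_rev x₁ x₂] at h₂
  simp only [Pi.sub_apply] at hdiff
  have hsq : μ * ‖x₂ - x₁‖ * ‖x₂ - x₁‖ ≤ L * ‖x₂ - x₁‖ := by nlinarith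
  rw [le_div_iff₀ hμ]
  rcases (norm_nonneg (x₂ - x₁)).eq_or_lt with h₀ | hpos
  · rwa [← h₀, zero_mul]
  · nlinarith [le_of_mul_le_mul_right hsq hpos]

end StrongConvexity

theorem rerm_leave_one_out_stability_general
    {d : ℕ} {Z : Type*} (n : ℕ)
    (W : Set (EuclideanSpace ℝ (Fin d)))
    (f : EuclideanSpace ℝ (Fin d) → Z → ℝ)
    (G : ℝ) (hG : 0 ≤ G)
    (hconv : ∀ z, ConvexOn ℝ W fun w => f w z)
    (hlip : ∀ z, ∀ w ∈ W, ∀ w' ∈ W, |f w z - f w' z| ≤ G * ‖w - w'‖)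
    (Ψ : EuclideanSpace ℝ (Fin d) → ℝ)
    (α : ℝ) (hα : 0 < α) (hΨ : StrongConvexOn W α Ψ)
    (lam : ℝ) (hlam : 0 < lam)
    (S : Fin (n + 1) → Z)
    (RS RSm : EuclideanSpace ℝ (Fin d))
    (hRS : RS ∈ W ∧ ∀ w ∈ W,
      (1 / (n + 1) : ℝ) * ∑ i, f RS (S i) + lam * Ψ RS ≤
        (1 / (n + 1) : ℝ) * ∑ i, f w (S i) + lam * Ψ w)
    (hRSm : RSm ∈ W ∧ ∀ w ∈ W,
      (1 / (n + 1) : ℝ) * ∑ i : Fin n, f RSm (S i.castSucc) + lam * Ψ RSm ≤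
        (1 / (n + 1) : ℝ) * ∑ i : Fin n, f w (S i.castSucc) + lam * Ψ w) :
    ‖RSm - RS‖ ≤ G / (α * (n + 1) * lam) := by
  have hm : (0 : ℝ) < n + 1 := by positivity
  have hreg := hΨ.const_mul hlam.le
  have hF₁ := ((ConvexOn.sum hΨ.1 Finset.univ fun i _ => hconv (S i)).smul
    (one_div_pos.mpr hm).le).add_strongConvexOn hreg
  have hF₂ := ((ConvexOn.sum hΨ.1 Finset.univ fun (i : Fin n) _ => hconv (S i.castSucc)).smul
    (one_div_pos.mpr hm).le).add_strongConvexOn hreg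
  have hbound := hF₁.norm_sub_le_of_isMinOn (L := G / (n + 1)) (by positivity)
    (by positivity) hF₂ hRS.1 hRSm.1 (isMinOn_iff.mpr hRS.2) (isMinOn_iff.mpr hRSm.2)
    fun x hx y hy => by
      simp only [Pi.sub_apply, Pi.add_apply, smul_eq_mul, Fin.sum_univ_castSucc]
      calc _ = |(f x (S (Fin.last n)) - f y (S (Fin.last n))) / (n + 1)| := by
            congr 1
            ring
        _ = |f x (S (Fin.last n)) - f y (S (Fin.last n))| / (n + 1) := by
            rw [abs_div, abs_of_pos hm]
        _ ≤ G * ‖x - y‖ / (n + 1) := by gcongr; exact hlip _ x hx y hy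
        _ = G / (n + 1) * ‖x - y‖ := by ring
  calc ‖RSm - RS‖ ≤ G / (n + 1) / (lam * α) := hbound
    _ = G / (α * (n + 1) * lam) := by rw [div_div]; ring

/-- Leave-one-out stability of regularized ERM in parameter space: if `f(·, z)` is
convex and `G`-Lipschitz on the convex set `W` for every `z`, and `Ψ` is `α`-strongly
convex on `W`, then the regularized ERM on the full sample and the regularized ERM on
the sample with the last point left out (same normalization `1/m`) are within Euclidean
distance `G/(αmλ)`. Here `m = n+1`. -/
theorem rerm_leave_one_out_stability
    {d : ℕ} {Z : Type*} (n : ℕ)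
    (W : Set (EuclideanSpace ℝ (Fin d))) (hW : Convex ℝ W)
    (f : EuclideanSpace ℝ (Fin d) → Z → ℝ)
    (G : ℝ) (hG : 0 ≤ G)
    (hconv : ∀ z, ConvexOn ℝ W fun w => f w z)
    (hlip : ∀ z, ∀ w ∈ W, ∀ w' ∈ W, |f w z - f w' z| ≤ G * ‖w - w'‖)
    (Ψ : EuclideanSpace ℝ (Fin d) → ℝ)
    (α : ℝ) (hα : 0 < α) (hΨ : StrongConvexOn W α Ψ)
    (lam : ℝ) (hlam : 0 < lam)
    (S : Fin (n + 1) → Z)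
    (RS RSm : EuclideanSpace ℝ (Fin d))
    (hRS : RS ∈ W ∧ ∀ w ∈ W,
      (1 / (n + 1) : ℝ) * ∑ i, f RS (S i) + lam * Ψ RS ≤
        (1 / (n + 1) : ℝ) * ∑ i, f w (S i) + lam * Ψ w)
    (hRSm : RSm ∈ W ∧ ∀ w ∈ W,
      (1 / (n + 1) : ℝ) * ∑ i : Fin n, f RSm (S i.castSucc) + lam * Ψ RSm ≤
        (1 / (n + 1) : ℝ) * ∑ i : Fin n, f w (S i.castSucc) + lam * Ψ w) :
    ‖RSm - RS‖ ≤ G / (α * (n + 1) * lam) :=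
  rerm_leave_one_out_stability_general n W f G hG hconv hlip Ψ α hα hΨ lam hlam S RS RSm hRS hRSm
end

section
/- Let α > 0, define q(z) = 2 − √(4 + z²) + z · arsinh(z/2) and Q_α(β) = Σ_{i=1}^d α² q(β_i / α²) for β ∈ ℝ^d. Let X ∈ ℝ^{n×d} and y ∈ ℝ^n. If β* ∈ ℝ^d has the form β*_i = 2α² sinh( (−4 Xᵀ s)_i ) for some s ∈ ℝ^n and satisfies X β* = y, then β* minimizes Q_α over the set {β ∈ ℝ^d : X β = y}. -/
/-- Tangent line inequality for `cosh` (convexity of `cosh`). -/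
lemma cosh_tangent_aux (u t : ℝ) :
    Real.cosh u + Real.sinh u * (t - u) ≤ Real.cosh t := by
  have e1 := Real.add_one_le_exp (t - u)
  have e2 := Real.add_one_le_exp (u - t)
  have p1 := Real.exp_pos u
  have p2 := Real.exp_pos (-u)
  have h1 : Real.exp t = Real.exp u * Real.exp (t - u) := by
    rw [← Real.exp_add]; ring_nf
  have h2 : Real.exp (-t) = Real.exp (-u) * Real.exp (u - t) := by
    rw [← Real.exp_add]; ring_nf
  rw [Real.cosh_eq, Real.cosh_eq, Real.sinh_eq]
  nlinarith [mul_le_mul_of_nonneg_left e1 p1.le, mul_le_mul_of_nonneg_left e2 p2.le]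

/-- Tangent line inequality for `q` at a point of the form `2 sinh c`. -/
lemma q_tangent_aux (q : ℝ → ℝ)
    (hq : ∀ z, q z = 2 - Real.sqrt (4 + z ^ 2) + z * Real.arsinh (z / 2))
    (c z : ℝ) :
    q (2 * Real.sinh c) + c * (z - 2 * Real.sinh c) ≤ q z := by
  have sq4 : ∀ w : ℝ, Real.sqrt (4 + w ^ 2) = 2 * Real.sqrt (1 + (w / 2) ^ 2) := by
    intro w
    rw [show (4 : ℝ) + w ^ 2 = 2 ^ 2 * (1 + (w / 2) ^ 2) by ring,
      Real.sqrt_mul (by positivity), Real.sqrt_sq (by norm_num)]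
  set u := Real.arsinh (z / 2) with hu
  have hsz : Real.sinh u = z / 2 := Real.sinh_arsinh _
  have hcz : Real.cosh u = Real.sqrt (1 + (z / 2) ^ 2) := Real.cosh_arsinh _
  have hz : q z = 2 - 2 * Real.cosh u + z * u := by
    rw [hq, sq4, hcz]
  have hac : Real.arsinh (2 * Real.sinh c / 2) = c := by
    rw [show 2 * Real.sinh c / 2 = Real.sinh c by ring, Real.arsinh_sinh]
  have hcc : Real.sqrt (1 + (2 * Real.sinh c / 2) ^ 2) = Real.cosh c := by
    rw [show 2 * Real.sinh c / 2 = Real.sinh c by ring, ← Real.cosh_arsinh,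
      Real.arsinh_sinh]
  have hw : q (2 * Real.sinh c) = 2 - 2 * Real.cosh c + 2 * Real.sinh c * c := by
    rw [hq, sq4, hcc, hac]
  rw [hz, hw]
  have key := cosh_tangent_aux u c
  have hz2 : z = 2 * Real.sinh u := by rw [hsz]; ring
  rw [hz2]; nlinarith [key]

/-- KKT characterization of the implicit bias of gradient flow on a depth-2 diagonal
linear network with square loss: if `β*` has the form `β*_i = 2α² sinh((−4Xᵀs)_i)` for
some `s ∈ ℝⁿ` and interpolates (`Xβ* = y`), then `β*` minimizes
`Q_α(β) = Σ_i α² q(β_i/α²)`, with `q(z) = 2 − √(4+z²) + z·arsinh(z/2)`, over all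
interpolating `β`. -/
theorem diag_net_implicit_bias_kkt
    {n d : ℕ} (α : ℝ) (hα : 0 < α)
    (q : ℝ → ℝ)
    (hq : ∀ z, q z = 2 - Real.sqrt (4 + z ^ 2) + z * Real.arsinh (z / 2))
    (Q : (Fin d → ℝ) → ℝ)
    (hQ : ∀ β, Q β = ∑ i, α ^ 2 * q (β i / α ^ 2))
    (X : Matrix (Fin n) (Fin d) ℝ) (y : Fin n → ℝ)
    (s : Fin n → ℝ) (βstar : Fin d → ℝ)
    (hβstar : ∀ i, βstar i = 2 * α ^ 2 * Real.sinh (-4 * X.transpose.mulVec s i))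
    (hfeas : X.mulVec βstar = y) :
    ∀ β : Fin d → ℝ, X.mulVec β = y → Q βstar ≤ Q β := by
  intro β hβ
  have hα2 : (0 : ℝ) < α ^ 2 := by positivity
  set c : Fin d → ℝ := fun i => -4 * X.transpose.mulVec s i with hc
  have hpt : ∀ i : Fin d,
      α ^ 2 * q (βstar i / α ^ 2) + c i * (β i - βstar i)
        ≤ α ^ 2 * q (β i / α ^ 2) := by
    intro i
    have hci : c i = -4 * X.transpose.mulVec s i := rfl
    have hb : βstar i / α ^ 2 = 2 * Real.sinh (c i) := by
      rw [hβstar i, hci]; field_simp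
    have key := q_tangent_aux q hq (c i) (β i / α ^ 2)
    rw [← hb] at key
    have key2 := mul_le_mul_of_nonneg_left key hα2.le
    have expand : α ^ 2 * (q (βstar i / α ^ 2) + c i * (β i / α ^ 2 - βstar i / α ^ 2))
        = α ^ 2 * q (βstar i / α ^ 2) + c i * (β i - βstar i) := by
      field_simp
    linarith [key2, expand.ge, expand.le]
  have hsum : ∑ i : Fin d, (α ^ 2 * q (βstar i / α ^ 2) + c i * (β i - βstar i))
      ≤ ∑ i : Fin d, α ^ 2 * q (β i / α ^ 2) :=
    Finset.sum_le_sum (fun i _ => hpt i)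
  have hzero : ∑ i, c i * (β i - βstar i) = 0 := by
    have h1 : ∑ i, c i * (β i - βstar i)
        = -4 * (dotProduct (X.transpose.mulVec s) (β - βstar)) := by
      simp only [dotProduct, Finset.mul_sum, hc, Pi.sub_apply]
      apply Finset.sum_congr rfl
      intro i _; ring
    rw [h1, Matrix.mulVec_transpose, ← Matrix.dotProduct_mulVec,
      Matrix.mulVec_sub, hβ, hfeas, sub_self, dotProduct_zero, mul_zero]
  rw [hQ, hQ]
  calc ∑ i, α ^ 2 * q (βstar i / α ^ 2)
      = ∑ i, (α ^ 2 * q (βstar i / α ^ 2) + c i * (β i - βstar i)) := by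
        rw [Finset.sum_add_distrib, hzero, add_zero]
    _ ≤ ∑ i, α ^ 2 * q (β i / α ^ 2) := hsum
end
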